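/- Let F be an AL-RNN such that for every p ≥ 1 and every p-tuple of sign patterns (s_1,…,s_p) the ordered product (A + W·D_{s_p})···(A + W·D_{s_1}), viewed as a complex matrix, has no eigenvalue of absolute value 1, and assume that every periodic point of F has all of its last P coordinates nonzero. Let z_n = F^n(z_0) be a bounded orbit with all z_n ∈ ⋃_s U_s and symbolic sequence a_n. Then the orbit is asymptotically aperiodic (i.e., there is no periodic orbit Γ of F with dist(z_n, Γ) → 0) if and only if the symbolic sequence (a_n) is aperiodic, i.e., there exist no p ≥ 1 and N with a_{n+p} = a_n for all n ≥ N. -/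

import Mathlib

/-!
On each linear subregion the AL-RNN `F` is affine. If the symbolic sequence is eventually
`p`-periodic from `N` on, the points `z (N + m p)` therefore obey an affine recursion
`w ↦ Q w + c`, where `Q` is the product of the subregion matrices along one period. `Q` is
hyperbolic, and a bounded orbit of a hyperbolic linear map tends to `0`: split the characteristic
polynomial into the factor with roots inside the unit circle and the one with roots outside;
boundedness annihilates the unstable component and the stable factor forces decay. Hence
`z (N + m p)` converges to the fixed point of the recursion, which by continuity of `F` is a
`p`-periodic point of `F` whose orbit attracts `z`.

Conversely, an orbit attracted by a periodic orbit `Γ` eventually shadows one orbit of `Γ`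
point by point, because the points of `Γ` are separated and `F` is continuous. The points of `Γ`
lie in open subregions, so the coding of the orbit eventually repeats the periodic coding
of `Γ`.
-/

open Matrix Filter Topology

/-- `Φ*`: identity on the first `M − P` coordinates, ReLU on the last `P` coordinates. -/
noncomputable def phiStar (M P : ℕ) (z : Fin M → ℝ) : Fin M → ℝ :=
  fun j => if (j : ℕ) < M - P then z j else max 0 (z j)

/-- The AL-RNN map `F(z) = A z + W Φ*(z) + h`. -/
noncomputable def alrnn (M P : ℕ) (A W : Matrix (Fin M) (Fin M) ℝ) (h : Fin M → ℝ)
    (z : Fin M → ℝ) : Fin M → ℝ :=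
  A.mulVec z + W.mulVec (phiStar M P z) + h

/-- The diagonal matrix `D_s` attached to a sign pattern `s : Fin P → Fin 2`: its first
`M − P` diagonal entries are `1` and the `(M − P + i)`-th diagonal entry is `s i`. -/
noncomputable def signDiag (M P : ℕ) (s : Fin P → Fin 2) : Matrix (Fin M) (Fin M) ℝ :=
  Matrix.diagonal fun j =>
    if (j : ℕ) < M - P then 1
    else if hj : (j : ℕ) - (M - P) < P then ((s ⟨(j : ℕ) - (M - P), hj⟩ : ℕ) : ℝ) else 0

/-- The open linear subregion `U_s`: the `(M − P + i)`-th coordinate is `> 0` if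
`s i = 1` and `< 0` if `s i = 0`. -/
def regionOpen (M P : ℕ) (hPM : P ≤ M) (s : Fin P → Fin 2) : Set (Fin M → ℝ) :=
  { z | ∀ i : Fin P,
      if s i = 1 then 0 < z ⟨M - P + (i : ℕ), by omega⟩
      else z ⟨M - P + (i : ℕ), by omega⟩ < 0 }

/-- The closed linear subregion: the sign conditions of `s` hold non-strictly. -/
def regionClosed (M P : ℕ) (hPM : P ≤ M) (s : Fin P → Fin 2) : Set (Fin M → ℝ) :=
  { z | ∀ i : Fin P,
      if s i = 1 then 0 ≤ z ⟨M - P + (i : ℕ), by omega⟩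
      else z ⟨M - P + (i : ℕ), by omega⟩ ≤ 0 }

section LinearRecurrence

open Polynomial

variable {V : Type*} [NormedAddCommGroup V] [NormedSpace ℂ V]

theorem tendsto_zero_of_eq_smul_add {μ : ℂ} (hμ : ‖μ‖ < 1) {v w : ℕ → V}
    (hv : ∀ n, v (n + 1) = μ • v n + w n) (hw : Tendsto w atTop (𝓝 0)) :
    Tendsto v atTop (𝓝 0) := by
  rw [NormedAddGroup.tendsto_nhds_zero] at hw ⊢
  intro ε hε
  have hδ : 0 < ε * (1 - ‖μ‖) / 2 := by nlinarith [norm_nonneg μ]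
  obtain ⟨N, hN⟩ := (hw _ hδ).exists_forall_of_atTop
  -- the error `ε / 2` is a fixed point of `r ↦ ‖μ‖ r + ε (1 - ‖μ‖) / 2`
  have hbound : ∀ k, ‖v (N + k)‖ ≤ ‖μ‖ ^ k * ‖v N‖ + ε / 2 := by
    intro k
    induction k with
    | zero => simp; linarith
    | succ k ih =>
      have hwk := (hN (N + k) (Nat.le_add_right N k)).le
      calc ‖v (N + (k + 1))‖ ≤ ‖μ‖ * ‖v (N + k)‖ + ‖w (N + k)‖ := by
            rw [← add_assoc, hv, ← norm_smul]; exact norm_add_le _ _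
        _ ≤ ‖μ‖ * (‖μ‖ ^ k * ‖v N‖ + ε / 2) + ε * (1 - ‖μ‖) / 2 := by gcongr
        _ = ‖μ‖ ^ (k + 1) * ‖v N‖ + ε / 2 := by ring
  have hgeom : Tendsto (fun k => ‖μ‖ ^ k * ‖v N‖) atTop (𝓝 0) := by
    simpa using (tendsto_pow_atTop_nhds_zero_of_lt_one (norm_nonneg μ) hμ).mul_const ‖v N‖
  obtain ⟨K, hK⟩ := (hgeom.eventually_lt_const (half_pos hε)).exists_forall_of_atTop
  filter_upwards [eventually_ge_atTop (N + K)] with n hn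
  obtain ⟨k, rfl⟩ := Nat.exists_eq_add_of_le (le_of_add_le_left hn)
  linarith [hbound k, hK k (by omega)]

theorem pow_apply_sub_smul (T : Module.End ℂ V) (μ : ℂ) (x : V) (n : ℕ) :
    (T ^ n) (T x - μ • x) = (T ^ (n + 1)) x - μ • (T ^ n) x := by
  rw [map_sub, map_smul, pow_succ, Module.End.mul_apply]

theorem aeval_prod_cons_apply (T : Module.End ℂ V) (μ : ℂ) (R : Multiset ℂ) (x : V) :
    aeval T ((μ ::ₘ R).map fun ν => X - C ν).prod x =
      aeval T (R.map fun ν => X - C ν).prod (T x - μ • x) := by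
  rw [Multiset.map_cons, Multiset.prod_cons, mul_comm, map_mul, Module.End.mul_apply, map_sub,
    aeval_X, aeval_C, LinearMap.sub_apply, Module.algebraMap_end_apply]

theorem tendsto_pow_apply_of_aeval_eq_zero (T : Module.End ℂ V) {R : Multiset ℂ}
    (hR : ∀ μ ∈ R, ‖μ‖ < 1) {x : V} (hx : aeval T (R.map fun μ => X - C μ).prod x = 0) :
    Tendsto (fun n => (T ^ n) x) atTop (𝓝 0) := by
  induction R using Multiset.induction_on generalizing x with
  | empty => simp_all
  | cons μ R ih =>
    rw [aeval_prod_cons_apply] at hx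
    refine tendsto_zero_of_eq_smul_add (hR μ (Multiset.mem_cons_self μ R)) (fun n => ?_)
      (ih (fun ν hν => hR ν (Multiset.mem_cons_of_mem hν)) hx)
    rw [pow_apply_sub_smul]; abel

theorem eq_zero_of_aeval_eq_zero_of_isBounded (T : Module.End ℂ V) {R : Multiset ℂ}
    (hR : ∀ μ ∈ R, 1 < ‖μ‖) {x : V} (hb : Bornology.IsBounded (Set.range fun n => (T ^ n) x))
    (hx : aeval T (R.map fun μ => X - C μ).prod x = 0) : x = 0 := by
  induction R using Multiset.induction_on generalizing x with
  | empty => simpa using hx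
  | cons μ R ih =>
    rw [aeval_prod_cons_apply] at hx
    obtain ⟨B, hB⟩ := hb.exists_norm_le
    have hbound : ∀ n, ‖(T ^ n) x‖ ≤ B := fun n => hB _ ⟨n, rfl⟩
    have hb' : Bornology.IsBounded (Set.range fun n => (T ^ n) (T x - μ • x)) := by
      refine isBounded_iff_forall_norm_le.2 ⟨B + ‖μ‖ * B, Set.forall_mem_range.2 fun n => ?_⟩
      rw [pow_apply_sub_smul]
      refine (norm_sub_le _ _).trans (add_le_add (hbound _) ?_)
      rw [norm_smul]
      exact mul_le_mul_of_nonneg_left (hbound n) (norm_nonneg μ)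
    have heigen : T x = μ • x :=
      sub_eq_zero.1 (ih (fun ν hν => hR ν (Multiset.mem_cons_of_mem hν)) hb' hx)
    have hpow : ∀ n, (T ^ n) x = μ ^ n • x := by
      intro n
      induction n with
      | zero => simp
      | succ n ihn =>
        rw [pow_succ', Module.End.mul_apply, ihn, map_smul, heigen, smul_smul, pow_succ]
    by_contra hx0
    obtain ⟨n, hn⟩ := pow_unbounded_of_one_lt (B / ‖x‖) (hR μ (Multiset.mem_cons_self μ R))
    have hle := hbound n
    rw [hpow, norm_smul, norm_pow] at hle
    rw [div_lt_iff₀ (norm_pos_iff.2 hx0)] at hn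
    linarith

theorem tendsto_pow_apply_of_isBounded [FiniteDimensional ℂ V] {T : Module.End ℂ V}
    (hT : ∀ μ ∈ spectrum ℂ T, ‖μ‖ ≠ 1) {x : V}
    (hb : Bornology.IsBounded (Set.range fun n => (T ^ n) x)) :
    Tendsto (fun n => (T ^ n) x) atTop (𝓝 0) := by
  classical
  set χ := T.charpoly
  have hroots : ∀ μ ∈ χ.roots, ‖μ‖ ≠ 1 := fun μ hμ =>
    hT μ ((Module.End.mem_spectrum_iff_isRoot_charpoly T μ).2 (isRoot_of_mem_roots hμ))
  set Rs := χ.roots.filter fun μ => ‖μ‖ < 1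
  set Ru := χ.roots.filter fun μ => ¬‖μ‖ < 1
  set qs := (Rs.map fun μ => X - C μ).prod
  set qu := (Ru.map fun μ => X - C μ).prod
  have hχ : qu * qs = χ := by
    rw [mul_comm, ← Multiset.prod_add, ← Multiset.map_add, Multiset.filter_add_not,
      ← (IsAlgClosed.splits χ).eq_prod_roots_of_monic (LinearMap.charpoly_monic T)]
  have hcomm : ∀ n, (T ^ n) (aeval T qs x) = aeval T qs ((T ^ n) x) := fun n => by
    rw [← Module.End.mul_apply, ← aeval_X_pow (R := ℂ), ← map_mul, mul_comm, map_mul,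
      Module.End.mul_apply]
  have hbs : Bornology.IsBounded (Set.range fun n => (T ^ n) (aeval T qs x)) := by
    simp only [hcomm]
    rw [← Set.image_univ, ← Set.image_image (aeval T qs), Set.image_univ]
    exact (LinearMap.toContinuousLinearMap (aeval T qs)).lipschitz.isBounded_image hb
  have hs : aeval T qs x = 0 := by
    refine eq_zero_of_aeval_eq_zero_of_isBounded T (R := Ru) (fun μ hμ => ?_) hbs ?_
    · obtain ⟨hμ, hlt⟩ := Multiset.mem_filter.1 hμ
      exact lt_of_le_of_ne (not_lt.1 hlt) (hroots μ hμ).symm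
    · rw [← Module.End.mul_apply, ← map_mul, hχ, LinearMap.aeval_self_charpoly,
        LinearMap.zero_apply]
  exact tendsto_pow_apply_of_aeval_eq_zero T (fun μ hμ => (Multiset.mem_filter.1 hμ).2) hs

theorem exists_tendsto_of_eq_apply_add [FiniteDimensional ℂ V] {T : Module.End ℂ V}
    (hT : ∀ μ ∈ spectrum ℂ T, ‖μ‖ ≠ 1) {c : V} {w : ℕ → V} (hw : ∀ n, w (n + 1) = T (w n) + c)
    (hb : Bornology.IsBounded (Set.range w)) : ∃ x, Tendsto w atTop (𝓝 x) := by
  have hunit : IsUnit (1 - T) := by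
    have h1 : (1 : ℂ) ∉ spectrum ℂ T := fun h1 => hT 1 h1 norm_one
    rwa [spectrum.mem_iff, not_not, map_one] at h1
  obtain ⟨x, hx⟩ := ((Module.End.isUnit_iff _).1 hunit).2 c
  have horbit : ∀ n, (T ^ n) (w 0 - x) = w n - x := by
    intro n
    induction n with
    | zero => simp
    | succ n ih =>
      rw [pow_succ', Module.End.mul_apply, ih, hw, map_sub, ← hx]
      simp only [LinearMap.sub_apply, Module.End.one_apply]
      abel
  have hbx : Bornology.IsBounded (Set.range fun n => (T ^ n) (w 0 - x)) := by
    simp only [horbit]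
    exact (hb.sub (Bornology.isBounded_singleton (x := x))).subset
      (Set.range_subset_iff.2 fun n => Set.sub_mem_sub ⟨n, rfl⟩ rfl)
  refine ⟨x, tendsto_sub_nhds_zero_iff.1 ?_⟩
  exact (tendsto_pow_apply_of_isBounded hT hbx).congr horbit

end LinearRecurrence

theorem Matrix.exists_tendsto_of_eq_mulVec_add {ι : Type*} [Fintype ι] [DecidableEq ι]
    {L : Matrix ι ι ℝ} (hL : ∀ μ ∈ spectrum ℂ (L.map Complex.ofReal), ‖μ‖ ≠ 1) {c : ι → ℝ}
    {w : ℕ → ι → ℝ} (hw : ∀ n, w (n + 1) = L *ᵥ w n + c)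
    (hb : Bornology.IsBounded (Set.range w)) : ∃ x, Tendsto w atTop (𝓝 x) := by
  let e : (ι → ℝ) →L[ℝ] (ι → ℂ) :=
    ContinuousLinearMap.pi fun i => Complex.ofRealCLM.comp (ContinuousLinearMap.proj i)
  have he : ∀ v, e (L *ᵥ v) = L.map Complex.ofReal *ᵥ e v := fun v =>
    funext (RingHom.map_mulVec Complex.ofRealHom L v)
  obtain ⟨x, hx⟩ := exists_tendsto_of_eq_apply_add (T := (L.map Complex.ofReal).toLin')
    (by rwa [Matrix.spectrum_toLin']) (c := e c) (w := fun n => e (w n))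
    (fun n => by rw [hw, map_add, he, Matrix.toLin'_apply])
    (by rw [Set.range_comp']; exact e.lipschitz.isBounded_image hb)
  refine ⟨fun i => (x i).re, tendsto_pi_nhds.2 fun i => ?_⟩
  exact (Complex.continuous_re.tendsto _).comp (((continuous_apply i).tendsto x).comp hx)

theorem Matrix.eq_listProd_mulVec {ι R : Type*} [Fintype ι] [DecidableEq ι] [Semiring R]
    {B : ℕ → Matrix ι ι R} {d : ℕ → ι → R} (hd : ∀ j, d (j + 1) = B j *ᵥ d j) (k : ℕ) :
    d k = (List.ofFn fun j : Fin k => B j).reverse.prod *ᵥ d 0 := by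
  induction k with
  | zero => simp
  | succ k ih =>
    rw [hd, ih, List.ofFn_succ', List.concat_eq_append, List.reverse_concat', List.prod_cons,
      Matrix.mulVec_mulVec]
    simp

theorem Set.Finite.exists_pos_forall_of_eventually {α : Type*} {S : Set α} (hS : S.Finite)
    {P : α → ℝ → Prop} (h : ∀ x ∈ S, ∀ᶠ r in 𝓝[>] (0 : ℝ), P x r) : ∃ r > 0, ∀ x ∈ S, P x r :=
  ((hS.eventually_all.2 h).and self_mem_nhdsWithin).exists.imp fun _ hr => ⟨hr.2, hr.1⟩

section Cycles

open Function

variable {α : Type*} {f : α → α}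

theorem isPeriodicPt_of_cycle {p : ℕ} {y : Fin p → α}
    (hy : ∀ k : Fin p, f (y k) = y ⟨(k + 1) % p, Nat.mod_lt _ k.pos⟩) (k : Fin p) :
    IsPeriodicPt f p (y k) := by
  have hiter : ∀ j : ℕ, f^[j] (y k) = y ⟨(k + j) % p, Nat.mod_lt _ k.pos⟩ := by
    intro j
    induction j with
    | zero => simp [Nat.mod_eq_of_lt k.isLt]
    | succ j ih =>
      rw [iterate_succ_apply', ih, hy]
      exact congrArg y (Fin.ext (by simp only [Nat.mod_add_mod, add_assoc]))
  rw [IsPeriodicPt, IsFixedPt, hiter]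
  simp [Nat.mod_eq_of_lt k.isLt]

theorem Function.IsPeriodicPt.exists_cycle {p : ℕ} (hp : 0 < p) {x : α}
    (hx : IsPeriodicPt f p x) :
    ∃ q, ∃ _ : 1 ≤ q, ∃ y : Fin q → α, Injective y ∧
      (∀ k : Fin q, f (y k) = y ⟨(k + 1) % q, Nat.mod_lt _ k.pos⟩) ∧
      ∀ n, f^[n] x ∈ Set.range y := by
  refine ⟨minimalPeriod f x, hx.minimalPeriod_pos hp, fun k => f^[k] x,
    fun k k' hkk' => Fin.ext (iterate_injOn_Iio_minimalPeriod k.2 k'.2 hkk'), fun k => ?_,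
    fun n => ⟨⟨n % minimalPeriod f x, Nat.mod_lt _ (hx.minimalPeriod_pos hp)⟩,
      iterate_mod_minimalPeriod_eq⟩⟩
  change f (f^[k] x) = f^[(k + 1) % minimalPeriod f x] x
  rw [iterate_mod_minimalPeriod_eq, iterate_succ_apply']

end Cycles

section PeriodicOrbits

open Function Metric

variable {X : Type*} [MetricSpace X] {F : X → X}

theorem eventually_nhdsGT_ball_subset {x : X} {U : Set X} (hU : U ∈ 𝓝 x) :
    ∀ᶠ r in 𝓝[>] (0 : ℝ), ball x r ⊆ U := by
  obtain ⟨ε, hε, hball⟩ := Metric.mem_nhds_iff.1 hU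
  filter_upwards [Ioc_mem_nhdsGT hε] with r hr using (ball_subset_ball hr.2).trans hball

theorem exists_forall_mem_of_tendsto_infDist (hF : Continuous F) {S : Set X} (hS : S.Finite)
    (hS0 : S.Nonempty) (hFS : Set.MapsTo F S S) {z : ℕ → X} (hz : ∀ n, z (n + 1) = F (z n))
    (hlim : Tendsto (fun n => infDist (z n) S) atTop (𝓝 0)) {U : X → Set X}
    (hU : ∀ x ∈ S, U x ∈ 𝓝 x) : ∃ N, ∃ x ∈ S, ∀ k, z (N + k) ∈ U (F^[k] x) := by
  obtain ⟨r, hr, hball⟩ : ∃ r > 0, ∀ x ∈ S, ball x r ⊆ U x ∩ (S \ {x})ᶜ :=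
    hS.exists_pos_forall_of_eventually fun x hx => eventually_nhdsGT_ball_subset <|
      Filter.inter_mem (hU x hx) <|
        (hS.subset Set.sdiff_subset).isClosed.isOpen_compl.mem_nhds (by simp)
  have hcont : ∀ x ∈ S, ∀ᶠ η in 𝓝[>] (0 : ℝ),
      η ≤ r / 2 ∧ ∀ x', dist x' x < η → dist (F x') (F x) < r / 2 := fun x _ => by
    obtain ⟨δ, hδ, hδF⟩ := Metric.continuousAt_iff.1 hF.continuousAt (r / 2) (half_pos hr)
    filter_upwards [Ioc_mem_nhdsGT (lt_min hδ (half_pos hr))] with η hη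
    exact ⟨hη.2.trans (min_le_right _ _),
      fun x' hx' => hδF (hx'.trans_le (hη.2.trans (min_le_left _ _)))⟩
  obtain ⟨η, hη, hηF⟩ := hS.exists_pos_forall_of_eventually hcont
  obtain ⟨N, hN⟩ := (hlim.eventually (gt_mem_nhds hη)).exists_forall_of_atTop
  obtain ⟨x, hxS, hx⟩ := (infDist_lt_iff hS0).1 (hN N le_rfl)
  -- any point of `S` within `η` of `z (N + k)` is `F^[k] x`: distinct points of `S` are `r` apart
  have hshadow : ∀ k, dist (z (N + k)) (F^[k] x) < η := by
    intro k
    induction k with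
    | zero => simpa using hx
    | succ k ih =>
      have hnext : dist (z (N + (k + 1))) (F^[k + 1] x) < r / 2 := by
        rw [← add_assoc, hz, iterate_succ_apply']
        exact (hηF _ (hFS.iterate k hxS)).2 _ ih
      obtain ⟨x', hx'S, hx'⟩ := (infDist_lt_iff hS0).1 (hN (N + (k + 1)) (by omega))
      have hx'ball : x' ∈ ball (F^[k + 1] x) r := by
        rw [mem_ball]
        linarith [dist_triangle_left x' (F^[k + 1] x) (z (N + (k + 1))),
          (hηF x hxS).1]
      have hx'eq : x' = F^[k + 1] x := by
        by_contra hne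
        exact (hball _ (hFS.iterate (k + 1) hxS) hx'ball).2 ⟨hx'S, hne⟩
      rwa [← hx'eq]
  refine ⟨N, x, hxS, fun k => (hball _ (hFS.iterate k hxS) ?_).1⟩
  rw [mem_ball]
  linarith [hshadow k, (hηF x hxS).1]

theorem isPeriodicPt_and_tendsto_dist_iterate (hF : Continuous F) {z : ℕ → X}
    (hz : ∀ n, z (n + 1) = F (z n)) {p N : ℕ} (hp : 0 < p) {x : X}
    (hx : Tendsto (fun m => z (N + m * p)) atTop (𝓝 x)) :
    IsPeriodicPt F p x ∧ Tendsto (fun n => dist (z (N + n)) (F^[n] x)) atTop (𝓝 0) := by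
  have hiter : ∀ n j, z (n + j) = F^[j] (z n) := by
    intro n j
    induction j with
    | zero => rfl
    | succ j ih => rw [← add_assoc, hz, ih, iterate_succ_apply']
  have hlim : ∀ j, Tendsto (fun m => z (N + m * p + j)) atTop (𝓝 (F^[j] x)) := fun j =>
    (((hF.iterate j).tendsto x).comp hx).congr fun m => (hiter _ j).symm
  have hper : IsPeriodicPt F p x := by
    refine tendsto_nhds_unique (hlim p) ?_
    refine ((tendsto_add_atTop_iff_nat 1).2 hx).congr fun m => ?_
    rw [add_mul, one_mul, add_assoc]
  refine ⟨hper, ?_⟩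
  have hblock : Tendsto (fun m => dist (fun j : Fin p => z (N + m * p + j))
      (fun j : Fin p => F^[j] x)) atTop (𝓝 0) :=
    tendsto_iff_dist_tendsto_zero.1 (tendsto_pi_nhds.2 fun j => hlim j)
  refine squeeze_zero (fun _ => dist_nonneg) (fun n => ?_)
    (hblock.comp (Nat.tendsto_div_const_atTop hp.ne'))
  have hn : N + n = N + n / p * p + n % p := by rw [add_assoc, Nat.div_add_mod']
  rw [hn, ← hper.iterate_mod_apply]
  exact dist_le_pi_dist (fun j : Fin p => z (N + n / p * p + j)) (fun j : Fin p => F^[j] x)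
    ⟨n % p, Nat.mod_lt _ hp⟩

theorem exists_cycle_tendsto_infDist (hF : Continuous F) {z : ℕ → X}
    (hz : ∀ n, z (n + 1) = F (z n)) {p N : ℕ} (hp : 0 < p) {x : X}
    (hx : Tendsto (fun m => z (N + m * p)) atTop (𝓝 x)) :
    ∃ q, ∃ _ : 1 ≤ q, ∃ y : Fin q → X, Injective y ∧
      (∀ k : Fin q, F (y k) = y ⟨(k + 1) % q, Nat.mod_lt _ k.pos⟩) ∧
      Tendsto (fun n => infDist (z n) (Set.range y)) atTop (𝓝 0) := by
  obtain ⟨hper, hdist⟩ := isPeriodicPt_and_tendsto_dist_iterate hF hz hp hx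
  obtain ⟨q, hq, y, hinj, hcyc, hmem⟩ := hper.exists_cycle hp
  refine ⟨q, hq, y, hinj, hcyc, (tendsto_add_atTop_iff_nat N).1 ?_⟩
  refine squeeze_zero (fun _ => infDist_nonneg) (fun n => ?_) hdist
  rw [add_comm]
  exact infDist_le_dist_of_mem (hmem n)

end PeriodicOrbits

section ALRNN

-- The symbolic coding; a zero coordinate is coded `0`, so it is faithful only on the open
-- subregions.
noncomputable def signPattern (M P : ℕ) (hPM : P ≤ M) (x : Fin M → ℝ) : Fin P → Fin 2 :=
  fun i => if 0 < x ⟨M - P + i, by omega⟩ then 1 else 0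

theorem continuous_phiStar (M P : ℕ) : Continuous (phiStar M P) :=
  continuous_pi fun j => by
    unfold phiStar
    split_ifs
    exacts [continuous_apply j, continuous_const.max (continuous_apply j)]

theorem continuous_alrnn (M P : ℕ) (A W : Matrix (Fin M) (Fin M) ℝ) (h : Fin M → ℝ) :
    Continuous (alrnn M P A W h) :=
  ((continuous_const.matrix_mulVec continuous_id).add
    (continuous_const.matrix_mulVec (continuous_phiStar M P))).add continuous_const

open Function

variable {M P : ℕ} {hPM : P ≤ M} {s : Fin P → Fin 2} {x : Fin M → ℝ}

theorem isOpen_regionOpen : IsOpen (regionOpen M P hPM s) := by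
  simp only [regionOpen, Set.ofPred_forall]
  refine isOpen_iInter_of_finite fun i => ?_
  split_ifs
  exacts [isOpen_lt continuous_const (continuous_apply _),
    isOpen_lt (continuous_apply _) continuous_const]

theorem regionOpen_subset_regionClosed : regionOpen M P hPM s ⊆ regionClosed M P hPM s :=
  fun x hx i => by
    have := hx i
    split_ifs at this ⊢
    exacts [this.le, this.le]

theorem eq_signPattern_of_mem_regionOpen (hx : x ∈ regionOpen M P hPM s) :
    s = signPattern M P hPM x := by
  funext i
  have := hx i
  unfold signPattern
  split_ifs at this ⊢ <;> first | assumption | linarith | omega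

theorem mem_regionOpen_signPattern (hx : ∀ i : Fin P, x ⟨M - P + i, by omega⟩ ≠ 0) :
    x ∈ regionOpen M P hPM (signPattern M P hPM x) := fun i => by
  unfold signPattern
  by_cases hpos : 0 < x ⟨M - P + i, by omega⟩
  · simp [hpos]
  · simpa [hpos] using (not_lt.1 hpos).lt_of_ne (hx i)

theorem phiStar_eq_signDiag_mulVec (hx : x ∈ regionClosed M P hPM s) :
    phiStar M P x = signDiag M P s *ᵥ x := by
  funext j
  rw [signDiag, Matrix.mulVec_diagonal, phiStar]
  by_cases hj : (j : ℕ) < M - P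
  · simp [hj]
  have hjP : (j : ℕ) - (M - P) < P := by omega
  have hxj := hx ⟨(j : ℕ) - (M - P), hjP⟩
  rw [show (⟨M - P + ((j : ℕ) - (M - P)), by omega⟩ : Fin M) = j from
    Fin.ext (Nat.add_sub_cancel' (not_lt.1 hj))] at hxj
  rcases Fin.exists_fin_two.1 ⟨s ⟨(j : ℕ) - (M - P), hjP⟩, rfl⟩ with hs | hs <;>
    simp_all

theorem alrnn_eq_of_mem_regionClosed (A W : Matrix (Fin M) (Fin M) ℝ) (h : Fin M → ℝ)
    (hx : x ∈ regionClosed M P hPM s) :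
    alrnn M P A W h x = (A + W * signDiag M P s) *ᵥ x + h := by
  rw [alrnn, phiStar_eq_signDiag_mulVec hx, Matrix.add_mulVec, Matrix.mulVec_mulVec]

variable {A W : Matrix (Fin M) (Fin M) ℝ} {h : Fin M → ℝ} {z : ℕ → Fin M → ℝ}
  {a : ℕ → Fin P → Fin 2}

theorem eventually_periodic_coding_of_tendsto_infDist_cycle
    (hper : ∀ z : Fin M → ℝ, (∃ p : ℕ, 1 ≤ p ∧ (alrnn M P A W h)^[p] z = z) →
      ∀ i : Fin P, z ⟨M - P + (i : ℕ), by omega⟩ ≠ 0)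
    (horb : ∀ n, z (n + 1) = alrnn M P A W h (z n))
    (ha : ∀ n, z n ∈ regionOpen M P hPM (a n)) {p : ℕ} (hp : 1 ≤ p) {y : Fin p → Fin M → ℝ}
    (hy : ∀ k : Fin p, alrnn M P A W h (y k) = y ⟨(k + 1) % p, Nat.mod_lt _ k.pos⟩)
    (hlim : Tendsto (fun n => Metric.infDist (z n) (Set.range y)) atTop (𝓝 0)) :
    ∃ N, ∀ n ≥ N, a (n + p) = a n := by
  set F := alrnn M P A W h
  have hperiodic : ∀ x ∈ Set.range y, IsPeriodicPt F p x := by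
    rintro _ ⟨k, rfl⟩
    exact isPeriodicPt_of_cycle hy k
  obtain ⟨N, x, hxS, hshadow⟩ := exists_forall_mem_of_tendsto_infDist (continuous_alrnn M P A W h)
    (Set.finite_range y) ⟨_, Set.mem_range_self ⟨0, hp⟩⟩
    (by rintro _ ⟨k, rfl⟩; exact ⟨_, (hy k).symm⟩) horb hlim
    (U := fun x => regionOpen M P hPM (signPattern M P hPM x))
    fun x hx => isOpen_regionOpen.mem_nhds
      (mem_regionOpen_signPattern (hper x ⟨p, hp, hperiodic x hx⟩))
  have hcode : ∀ k, a (N + k) = signPattern M P hPM (F^[k] x) := fun k =>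
    (eq_signPattern_of_mem_regionOpen (ha _)).trans
      (eq_signPattern_of_mem_regionOpen (hshadow k)).symm
  refine ⟨N, fun n hn => ?_⟩
  obtain ⟨k, rfl⟩ := Nat.exists_eq_add_of_le hn
  rw [add_assoc, hcode, hcode, iterate_add_apply, (hperiodic x hxS).eq]

theorem exists_tendsto_of_eventually_periodic_coding
    (hhyp : ∀ p : ℕ, 1 ≤ p → ∀ s : Fin p → Fin P → Fin 2,
      ∀ μ ∈ spectrum ℂ
        ((((List.ofFn fun k : Fin p => A + W * signDiag M P (s k)).reverse).prod).map
          Complex.ofReal),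
        ‖μ‖ ≠ 1)
    (horb : ∀ n, z (n + 1) = alrnn M P A W h (z n)) (hbdd : Bornology.IsBounded (Set.range z))
    (ha : ∀ n, z n ∈ regionOpen M P hPM (a n)) {p N : ℕ} (hp : 1 ≤ p)
    (hN : ∀ n ≥ N, a (n + p) = a n) : ∃ x, Tendsto (fun m => z (N + m * p)) atTop (𝓝 x) := by
  have hperiodic : ∀ m j, a (N + m * p + j) = a (N + j) := by
    intro m j
    induction m with
    | zero => simp
    | succ m ih => rw [show N + (m + 1) * p + j = N + m * p + j + p by ring, hN _ (by omega), ih]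
  have hstep : ∀ n, z (n + 1) = (A + W * signDiag M P (a n)) *ᵥ z n + h := fun n => by
    rw [horb, alrnn_eq_of_mem_regionClosed A W h (regionOpen_subset_regionClosed (ha n))]
  set Q := (List.ofFn fun k : Fin p => A + W * signDiag M P (a (N + k))).reverse.prod
  -- two orbit segments with the same itinerary differ by the linear cocycle of that itinerary
  have hdiff : ∀ m, z (N + m * p + p) - z (N + p) = Q *ᵥ (z (N + m * p) - z N) := fun m =>
    Matrix.eq_listProd_mulVec (d := fun j => z (N + m * p + j) - z (N + j)) (fun j => by
      rw [← add_assoc, ← add_assoc, hstep, hstep, hperiodic, Matrix.mulVec_sub,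
        add_sub_add_right_eq_sub]) p
  refine Matrix.exists_tendsto_of_eq_mulVec_add (hhyp p hp fun k => a (N + k))
    (c := z (N + p) - Q *ᵥ z N) (fun m => ?_)
    (hbdd.subset (Set.range_subset_iff.2 fun m => Set.mem_range_self _))
  rw [add_mul, one_mul, ← add_assoc, ← sub_add_cancel (z (N + m * p + p)) (z (N + p)), hdiff,
    Matrix.mulVec_sub]
  abel

end ALRNN

/-- For an AL-RNN all of whose ordered products of subregion matrices
along arbitrary finite itineraries are hyperbolic (no complex eigenvalue of absolute value
1), and all of whose periodic points have nonzero last `P` coordinates, a bounded orbit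
staying in the union of the open subregions is asymptotically aperiodic (no periodic
orbit of the AL-RNN attracts it) if and only if its symbolic sequence is aperiodic. -/
theorem stmt5 (M P : ℕ) (hPM : P ≤ M)
    (A W : Matrix (Fin M) (Fin M) ℝ) (h : Fin M → ℝ)
    (hhyp : ∀ p : ℕ, 1 ≤ p → ∀ s : Fin p → Fin P → Fin 2,
      ∀ μ ∈ spectrum ℂ
        ((((List.ofFn fun k : Fin p => A + W * signDiag M P (s k)).reverse).prod).map
          Complex.ofReal),
        ‖μ‖ ≠ 1)
    (hper : ∀ z : Fin M → ℝ, (∃ p : ℕ, 1 ≤ p ∧ (alrnn M P A W h)^[p] z = z) →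
      ∀ i : Fin P, z ⟨M - P + (i : ℕ), by omega⟩ ≠ 0)
    (z : ℕ → Fin M → ℝ) (horb : ∀ n : ℕ, z (n + 1) = alrnn M P A W h (z n))
    (hbdd : Bornology.IsBounded (Set.range z))
    (a : ℕ → Fin P → Fin 2) (ha : ∀ n : ℕ, z n ∈ regionOpen M P hPM (a n)) :
    (¬ ∃ p : ℕ, ∃ _hp : 1 ≤ p, ∃ y : Fin p → Fin M → ℝ,
        Function.Injective y ∧
        (∀ k : Fin p, alrnn M P A W h (y k) = y ⟨((k : ℕ) + 1) % p, Nat.mod_lt _ (by omega)⟩) ∧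
        Tendsto (fun n => Metric.infDist (z n) (Set.range y)) atTop (𝓝 0)) ↔
      (¬ ∃ p : ℕ, 1 ≤ p ∧ ∃ N : ℕ, ∀ n ≥ N, a (n + p) = a n) := by
  rw [not_iff_not]
  constructor
  · rintro ⟨p, hp, y, -, hy, hlim⟩
    exact ⟨p, hp, eventually_periodic_coding_of_tendsto_infDist_cycle hper horb ha hp hy hlim⟩
  · rintro ⟨p, hp, N, hN⟩
    obtain ⟨x, hx⟩ := exists_tendsto_of_eventually_periodic_coding hhyp horb hbdd ha hp hN
    exact exists_cycle_tendsto_infDist (continuous_alrnn M P A W h) horb hp hx
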